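/- arXiv:2003.07103 — 6 statements merged into one kernel-verified Lean document; each statement's English description precedes it below -/
import Mathlib

section
/- Let Q0(z,u), Q1(z,u), Q2(z,u) be polynomials with non-negative real coefficients and let M(z,u) be the formal power series solution of the linear catalytic equation. Then there exists a unique formal power series u(z) ∈ ℝ[[z]] with u(0)=0 satisfying u(z) = z·Q2(z,u(z)) + z·u(z)·Q1(z,u(z)), and the series M(z,0) satisfies M(z,0)·(1 − z·Q1(z,u(z))) = Q0(z,u(z)) in ℝ[[z]]; equivalently M(z,0) = Q0(z,u(z))/(1 − z·Q1(z,u(z))). -/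
noncomputable section

/-- Coefficientwise division by `u` after removing the constant coefficient:
`divU g = (g - g(0))/u` for `g ∈ ℝ[[u]]`. -/
def divU (g : PowerSeries ℝ) : PowerSeries ℝ :=
  PowerSeries.mk fun n => PowerSeries.coeff (R := ℝ) (n + 1) g

/-- The divided difference `(M(z,u) - M(z,0))/u`, applied coefficientwise in `z`,
for `M ∈ ℝ[[u]][[z]]` (outer variable `z`, inner variable `u`). -/
def divDiff (M : PowerSeries (PowerSeries ℝ)) : PowerSeries (PowerSeries ℝ) :=
  PowerSeries.mk fun n => divU (PowerSeries.coeff (R := PowerSeries ℝ) n M)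

/-- Embedding of a bivariate polynomial `Q(z,u)` (outer polynomial variable `z`,
inner polynomial variable `u`) into `ℝ[[u]][[z]]`. -/
def embQ (Q : Polynomial (Polynomial ℝ)) : PowerSeries (PowerSeries ℝ) :=
  Polynomial.eval₂
    ((PowerSeries.C (R := PowerSeries ℝ)).comp
      (Polynomial.eval₂RingHom (PowerSeries.C (R := ℝ)) PowerSeries.X))
    PowerSeries.X Q

/-- Evaluation `Q(z, w(z))` of a bivariate polynomial `Q(z,u)` at `u = w(z) ∈ ℝ[[z]]`. -/
def evalZU (Q : Polynomial (Polynomial ℝ)) (w : PowerSeries ℝ) : PowerSeries ℝ :=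
  Polynomial.eval₂ (Polynomial.eval₂RingHom (PowerSeries.C (R := ℝ)) w) PowerSeries.X Q

/-- `M(z,0)`: set the catalytic variable `u` to zero. -/
def atU0 (M : PowerSeries (PowerSeries ℝ)) : PowerSeries ℝ :=
  PowerSeries.map (PowerSeries.constantCoeff (R := ℝ)) M

/-! The kernel root `u(z)` is the fixed point of `a ↦ z Q2(z,a) + z a Q1(z,a)`, a contraction
for the `z`-adic topology, obtained by iterating from `0`. Since `u(0) = 0`, the substitution
`u ↦ u(z)` is a ring homomorphism `ℝ⟦u⟧⟦z⟧ → ℝ⟦z⟧`. Writing `M(z,u) = M(z,0) + u Δ(z,u)`, where `Δ`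
is the divided difference, the substituted equation becomes
`M(z,0) (1 - z Q1) = Q0 + Δ(z,u(z)) (z Q2 + z u Q1 - u)`, and the last factor vanishes because
`u(z)` is a root of the kernel. -/

namespace PowerSeries

variable {R : Type*} [CommRing R]

theorem eq_zero_of_forall_X_pow_dvd {f : R⟦X⟧} (h : ∀ n, (X : R⟦X⟧) ^ n ∣ f) : f = 0 := by
  ext n
  exact X_pow_dvd_iff.mp (h (n + 1)) n n.lt_succ_self

theorem existsUnique_fixedPoint_of_contracting {G : R⟦X⟧ → R⟦X⟧}
    (hG : ∀ n a b, (X : R⟦X⟧) ^ n ∣ a - b → X ^ (n + 1) ∣ G a - G b) :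
    ∃! f, G f = f := by
  set a : ℕ → R⟦X⟧ := fun k => G^[k] 0 with ha
  have hstep (k : ℕ) : X ^ k ∣ a (k + 1) - a k := by
    induction k with
    | zero => simp
    | succ k ih => simpa only [ha, Function.iterate_succ_apply'] using hG k _ _ ih
  have hcauchy (k l : ℕ) (hkl : k ≤ l) : X ^ k ∣ a l - a k := by
    induction l, hkl using Nat.le_induction with
    | base => simp
    | succ l hkl ih => simpa using dvd_add ((pow_dvd_pow X hkl).trans (hstep l)) ih
  set f : R⟦X⟧ := mk fun n => coeff n (a (n + 1)) with hf
  have hlim (N : ℕ) : X ^ N ∣ f - a N := by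
    refine X_pow_dvd_iff.mpr fun k hk => ?_
    have hk := X_pow_dvd_iff.mp (hcauchy (k + 1) N hk) k k.lt_succ_self
    rw [map_sub, sub_eq_zero] at hk
    rw [map_sub, hf, coeff_mk, hk, sub_self]
  have hfix : G f = f := by
    refine sub_eq_zero.mp (eq_zero_of_forall_X_pow_dvd fun N => ?_)
    have hGf : X ^ (N + 1) ∣ G f - a (N + 1) := by
      simpa only [ha, Function.iterate_succ_apply'] using hG N _ _ (hlim N)
    exact (pow_dvd_pow X N.le_succ).trans (by simpa using dvd_sub hGf (hlim (N + 1)))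
  refine ⟨f, hfix, fun g hg => sub_eq_zero.mp (eq_zero_of_forall_X_pow_dvd fun n => ?_)⟩
  induction n with
  | zero => simp
  | succ n ih => simpa only [hg, hfix] using hG n g f ih

theorem algHom_eq_id_of_map_X {φ : R⟦X⟧ →ₐ[R] R⟦X⟧} (hX : φ X = X) : φ = AlgHom.id R R⟦X⟧ := by
  have hpoly : φ.comp (Polynomial.coeToPowerSeries.algHom R) =
      Polynomial.coeToPowerSeries.algHom R :=
    Polynomial.algHom_ext (by simpa using hX)
  ext1 f
  rw [AlgHom.id_apply, ← sub_eq_zero]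
  refine eq_zero_of_forall_X_pow_dvd fun n => ?_
  rw [eq_X_pow_mul_shift_add_trunc n f, map_add, map_mul, map_pow, hX]
  have htrunc : φ (f.trunc n) = f.trunc n := by simpa using DFunLike.congr_fun hpoly (f.trunc n)
  rw [htrunc, add_sub_add_right_eq_sub, ← mul_sub]
  exact dvd_mul_right _ _

/-- The substitution `(z, u) ↦ (z, w(z))` on `R⟦u⟧⟦z⟧`, through the identification of
`R⟦u⟧⟦z⟧` with power series in the variables `Option Unit` (`none` standing for `z`). -/
def substInner (w : R⟦X⟧) (hw : constantCoeff w = 0) : R⟦X⟧⟦X⟧ →ₐ[R] R⟦X⟧ :=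
  (MvPowerSeries.substAlgHom (R := R) (a := fun o : Option Unit => o.elim X fun _ => w)
      (MvPowerSeries.hasSubst_of_constantCoeff_zero <| by
        rintro (_ | _)
        exacts [constantCoeff_X, hw])).comp
    (MvPowerSeries.optionEquivLeft Unit R).symm.toAlgHom

variable (w : R⟦X⟧) (hw : constantCoeff w = 0)

theorem substInner_X : substInner w hw X = X := by
  have hX : (MvPowerSeries.optionEquivLeft Unit R).symm X = MvPowerSeries.X none := by
    rw [AlgEquiv.symm_apply_eq, MvPowerSeries.optionEquivLeft_X_none]
  rw [substInner, AlgHom.comp_apply, AlgEquiv.toAlgHom_apply, hX, MvPowerSeries.substAlgHom_X]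
  rfl

theorem substInner_C_X : substInner w hw (C X) = w := by
  have hCX : (MvPowerSeries.optionEquivLeft Unit R).symm (C X) = MvPowerSeries.X (some ()) := by
    rw [AlgEquiv.symm_apply_eq, MvPowerSeries.optionEquivLeft_X_some]
    rfl
  rw [substInner, AlgHom.comp_apply, AlgEquiv.toAlgHom_apply, hCX, MvPowerSeries.substAlgHom_X]
  rfl

theorem substInner_map_C (f : R⟦X⟧) : substInner w hw (map C f) = f :=
  DFunLike.congr_fun (algHom_eq_id_of_map_X (φ := (substInner w hw).comp
    (mapAlgHom (Algebra.ofId R R⟦X⟧))) (by rw [AlgHom.comp_apply, mapAlgHom_apply, map_X,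
      substInner_X])) f

end PowerSeries

open PowerSeries

theorem C_X_mul_divDiff (M : PowerSeries (PowerSeries ℝ)) :
    C X * divDiff M = M - map C (atU0 M) := by
  ext n : 1
  rw [coeff_C_mul, divDiff, coeff_mk, divU, ← sub_const_eq_X_mul_shift, map_sub, coeff_map, atU0,
    coeff_map]

theorem substInner_embQ (w : PowerSeries ℝ) (hw : constantCoeff w = 0)
    (Q : Polynomial (Polynomial ℝ)) : substInner w hw (embQ Q) = evalZU Q w := by
  have h := Polynomial.hom_eval₂ Q ((C).comp (Polynomial.eval₂RingHom C X))
    (substInner w hw).toRingHom X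
  rw [AlgHom.toRingHom_eq_coe, RingHom.coe_coe, substInner_X] at h
  rw [embQ, evalZU, h]
  congr 1
  refine Polynomial.ringHom_ext (fun r => ?_) ?_
  · simp only [RingHom.comp_apply, Polynomial.coe_eval₂RingHom, Polynomial.eval₂_C,
      RingHom.coe_coe]
    simpa only [PowerSeries.algebraMap_apply, algebraMap_eq] using (substInner w hw).commutes r
  · simp [substInner_C_X]

theorem evalZU_sub_dvd (Q : Polynomial (Polynomial ℝ)) {a b c : PowerSeries ℝ}
    (h : c ∣ a - b) : c ∣ evalZU Q a - evalZU Q b := by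
  rw [← Ideal.mem_span_singleton, ← Ideal.Quotient.eq, evalZU, evalZU,
    Polynomial.hom_eval₂, Polynomial.hom_eval₂]
  congr 1
  refine Polynomial.ringHom_ext (fun r => by simp) ?_
  simpa [Ideal.Quotient.eq, Ideal.mem_span_singleton] using h

theorem existsUnique_kernelRoot (Q1 Q2 : Polynomial (Polynomial ℝ)) :
    ∃! u : PowerSeries ℝ, constantCoeff u = 0 ∧
      u = X * evalZU Q2 u + X * u * evalZU Q1 u := by
  set G : PowerSeries ℝ → PowerSeries ℝ := fun a => X * evalZU Q2 a + X * a * evalZU Q1 a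
  have hG (n : ℕ) (a b : PowerSeries ℝ) (h : X ^ n ∣ a - b) : X ^ (n + 1) ∣ G a - G b := by
    have hsplit : G a - G b = X * ((evalZU Q2 a - evalZU Q2 b)
        + ((a - b) * evalZU Q1 a + b * (evalZU Q1 a - evalZU Q1 b))) := by ring
    rw [hsplit, pow_succ']
    exact mul_dvd_mul_left X (dvd_add (evalZU_sub_dvd Q2 h)
      (dvd_add (h.mul_right _) ((evalZU_sub_dvd Q1 h).mul_left b)))
  obtain ⟨u, hu, huniq⟩ := existsUnique_fixedPoint_of_contracting hG
  have hu0 : constantCoeff u = 0 := by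
    rw [← hu]
    simp [G]
  exact ⟨u, ⟨hu0, hu.symm⟩, fun v hv => huniq v hv.2.symm⟩

theorem linear_catalytic_kernel_method_general
    (Q0 Q1 Q2 : Polynomial (Polynomial ℝ))
    (M : PowerSeries (PowerSeries ℝ))
    (hM : M = embQ Q0 + PowerSeries.X * M * embQ Q1 +
      PowerSeries.X * divDiff M * embQ Q2) :
    (∃! u : PowerSeries ℝ, PowerSeries.constantCoeff (R := ℝ) u = 0 ∧
      u = PowerSeries.X * evalZU Q2 u + PowerSeries.X * u * evalZU Q1 u) ∧
    (∀ u : PowerSeries ℝ, PowerSeries.constantCoeff (R := ℝ) u = 0 →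
      u = PowerSeries.X * evalZU Q2 u + PowerSeries.X * u * evalZU Q1 u →
      atU0 M * (1 - PowerSeries.X * evalZU Q1 u) = evalZU Q0 u) := by
  refine ⟨existsUnique_kernelRoot Q1 Q2, fun u hu0 hu => ?_⟩
  set Φ := substInner u hu0 with hΦ
  have hΦM : Φ M = evalZU Q0 u + X * Φ M * evalZU Q1 u + X * Φ (divDiff M) * evalZU Q2 u := by
    simpa only [hΦ, map_add, map_mul, substInner_X, substInner_embQ] using congrArg Φ hM
  have hΦD : u * Φ (divDiff M) = Φ M - atU0 M := by
    simpa only [hΦ, map_mul, map_sub, substInner_C_X, substInner_map_C] using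
      congrArg Φ (C_X_mul_divDiff M)
  linear_combination hΦM + (1 - X * evalZU Q1 u) * hΦD - Φ (divDiff M) * hu

/-- **Proposition 1** (kernel method).  If `M(z,u)` is the power series solution of the
linear catalytic equation
`M(z,u) = Q0(z,u) + z M(z,u) Q1(z,u) + z ((M(z,u) - M(z,0))/u) Q2(z,u)`, where
`Q0, Q1, Q2` are polynomials with non-negative coefficients, then there is a unique
power series `u(z)` with `u(0) = 0` and `u(z) = z Q2(z,u(z)) + z u(z) Q1(z,u(z))`, and
`M(z,0) (1 - z Q1(z,u(z))) = Q0(z,u(z))`, i.e. `M(z,0) = Q0(z,u(z))/(1 - z Q1(z,u(z)))`. -/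
theorem linear_catalytic_kernel_method
    (Q0 Q1 Q2 : Polynomial (Polynomial ℝ))
    (hQ0 : ∀ i j, 0 ≤ (Q0.coeff i).coeff j)
    (hQ1 : ∀ i j, 0 ≤ (Q1.coeff i).coeff j)
    (hQ2 : ∀ i j, 0 ≤ (Q2.coeff i).coeff j)
    (M : PowerSeries (PowerSeries ℝ))
    (hM : M = embQ Q0 + PowerSeries.X * M * embQ Q1 +
      PowerSeries.X * divDiff M * embQ Q2) :
    (∃! u : PowerSeries ℝ, PowerSeries.constantCoeff (R := ℝ) u = 0 ∧
      u = PowerSeries.X * evalZU Q2 u + PowerSeries.X * u * evalZU Q1 u) ∧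
    (∀ u : PowerSeries ℝ, PowerSeries.constantCoeff (R := ℝ) u = 0 →
      u = PowerSeries.X * evalZU Q2 u + PowerSeries.X * u * evalZU Q1 u →
      atU0 M * (1 - PowerSeries.X * evalZU Q1 u) = evalZU Q0 u) :=
  linear_catalytic_kernel_method_general Q0 Q1 Q2 M hM
end
end

section
/- Let P(x0,x1,z,u) be real-analytic near p = (f0, y0, z0, u0) ∈ ℝ⁴ with P_{x1}(p) ≠ 0 and P_{x0x0}(p) ≠ 0, and suppose f̄(z,u) and ȳ(z,u) are analytic near (z0,u0) with f̄(z0,u0) = f0, ȳ(z0,u0) = y0, satisfying P(f̄(z,u), ȳ(z,u), z, u) = 0 and P_{x0}(f̄(z,u), ȳ(z,u), z, u) = 0 identically near (z0,u0). Define P̄(z,u) = P_u(f̄(z,u), ȳ(z,u), z, u) and let Δ be the determinant of the 3×3 matrix with rows (P_{x0}, P_{x1}, P_z), (P_{x0x0}, P_{x0x1}, P_{x0z}), (P_{x0u}, P_{x1u}, P_{uz}), all entries evaluated at p. Then ∂P̄/∂z(z0,u0) = −Δ/(P_{x1}(p)·P_{x0x0}(p)); in particular ∂P̄/∂z(z0,u0)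 ≠ 0 if and only if Δ ≠ 0. -/
/-!
Differentiating the identities `P(f̄, ȳ, z, u₀) = 0` and `P_{x0}(f̄, ȳ, z, u₀) = 0` in `z` shows
that `(f̄_z, ȳ_z, 1)` is annihilated by the first two rows of the matrix defining `Δ`, while the
chain rule and the symmetry of second derivatives show that `P̄_z` is its product with the third
row. Adding `f̄_z` times the first column and `ȳ_z` times the second to the third column leaves
the last column `(0, 0, P̄_z)`, so `Δ = -P̄_z · P_{x1} · P_{x0x0}` since `P_{x0}(p) = 0`.
-/

open Filter Topology

section

variable {E F : Type*} [NormedAddCommGroup E] [NormedSpace ℝ E]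
  [NormedAddCommGroup F] [NormedSpace ℝ F] {Q : E → F} {q : E}

theorem ContDiffAt.eventually_differentiableAt (hQ : ContDiffAt ℝ 2 Q q) :
    ∀ᶠ q' in 𝓝 q, DifferentiableAt ℝ Q q' :=
  (hQ.eventually (by simp)).mono fun _ h => h.differentiableAt two_ne_zero

theorem ContDiffAt.hasFDerivAt_fderiv_apply (hQ : ContDiffAt ℝ 2 Q q) (v : E) :
    HasFDerivAt (fun q' => fderiv ℝ Q q' v) ((fderiv ℝ (fderiv ℝ Q) q).flip v) q := by
  have hD : DifferentiableAt ℝ (fderiv ℝ Q) q :=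
    (hQ.fderiv_right (m := 1) le_rfl).differentiableAt one_ne_zero
  simpa using hD.hasFDerivAt.clm_apply (hasFDerivAt_const v q)

theorem ContDiffAt.differentiableAt_of_eventuallyEq_fderiv_apply (hQ : ContDiffAt ℝ 2 Q q)
    {g : E → F} {v : E} (hg : g =ᶠ[𝓝 q] fun q' => fderiv ℝ Q q' v) :
    DifferentiableAt ℝ g q :=
  (hQ.hasFDerivAt_fderiv_apply v).differentiableAt.congr_of_eventuallyEq hg

theorem ContDiffAt.fderiv_apply_comm_of_eventuallyEq (hQ : ContDiffAt ℝ 2 Q q)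
    {g h : E → F} {v w : E} (hg : g =ᶠ[𝓝 q] fun q' => fderiv ℝ Q q' v)
    (hh : h =ᶠ[𝓝 q] fun q' => fderiv ℝ Q q' w) :
    fderiv ℝ g q w = fderiv ℝ h q v := by
  rw [hg.fderiv_eq, hh.fderiv_eq, (hQ.hasFDerivAt_fderiv_apply v).fderiv,
    (hQ.hasFDerivAt_fderiv_apply w).fderiv]
  exact hQ.isSymmSndFDerivAt (by simp) w v

theorem HasDerivAt.eq_zero_of_eventually_eq_zero {f : ℝ → F} {f' : F} {x : ℝ}
    (hf : HasDerivAt f f' x) (h : ∀ᶠ t in 𝓝 x, f t = 0) : f' = 0 :=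
  hf.unique ((hasDerivAt_const x 0).congr_of_eventuallyEq h)

theorem differentiableAt_fst_slice {f : ℝ → E → F} {z : ℝ} {u : E}
    (hf : DifferentiableAt ℝ (fun q : ℝ × E => f q.1 q.2) (z, u)) :
    DifferentiableAt ℝ (fun t => f t u) z :=
  hf.comp (f := fun t => (t, u)) z (differentiableAt_id.prodMk (differentiableAt_const u))

end

theorem Matrix.det_fin_three_eq_neg_mul_of_annihilated {R : Type*} [CommRing R]
    {m₀₀ m₀₁ m₀₂ m₁₀ m₁₁ m₁₂ m₂₀ m₂₁ m₂₂ a b : R} (h₀₀ : m₀₀ = 0)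
    (h₀ : a * m₀₀ + b * m₀₁ + m₀₂ = 0) (h₁ : a * m₁₀ + b * m₁₁ + m₁₂ = 0) :
    !![m₀₀, m₀₁, m₀₂; m₁₀, m₁₁, m₁₂; m₂₀, m₂₁, m₂₂].det
      = -(a * m₂₀ + b * m₂₁ + m₂₂) * (m₀₁ * m₁₀) := by
  rw [Matrix.det_fin_three]
  simp only [Matrix.of_apply, Matrix.cons_val', Matrix.cons_val_zero, Matrix.cons_val_one,
    Matrix.cons_val, Matrix.cons_val_fin_one]
  linear_combination (m₁₁ * (a * m₂₀ + b * m₂₁ + m₂₂)) * h₀₀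
    + (m₀₁ * m₂₀ - m₀₀ * m₂₁) * h₁ + (m₁₀ * m₂₁ - m₁₁ * m₂₀) * h₀

theorem eq_neg_det_div_of_annihilated {K : Type*} [Field K]
    {m₀₀ m₀₁ m₀₂ m₁₀ m₁₁ m₁₂ m₂₀ m₂₁ m₂₂ a b c Δ : K}
    (hΔ : Δ = !![m₀₀, m₀₁, m₀₂; m₁₀, m₁₁, m₁₂; m₂₀, m₂₁, m₂₂].det) (h₀₀ : m₀₀ = 0)
    (h₀ : a * m₀₀ + b * m₀₁ + m₀₂ = 0) (h₁ : a * m₁₀ + b * m₁₁ + m₁₂ = 0)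
    (hc : c = a * m₂₀ + b * m₂₁ + m₂₂) (hm₀₁ : m₀₁ ≠ 0) (hm₁₀ : m₁₀ ≠ 0) :
    c = -Δ / (m₀₁ * m₁₀) ∧ (c ≠ 0 ↔ Δ ≠ 0) := by
  rw [Matrix.det_fin_three_eq_neg_mul_of_annihilated h₀₀ h₀ h₁, ← hc] at hΔ
  subst hΔ
  constructor
  · field_simp
  · simp [hm₀₁, hm₁₀]

def uncurry4 (P : ℝ → ℝ → ℝ → ℝ → ℝ) (q : ℝ × ℝ × ℝ × ℝ) : ℝ :=
  P q.1 q.2.1 q.2.2.1 q.2.2.2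

/- These unfold to the `deriv` terms of the statement; in an iterated partial the outer
derivative is written first, e.g. `partial₁ (partial₀ P) x y z u` is
`deriv (fun r => deriv (fun s => P s r z u) x) y`. -/
noncomputable def partial₀ (P : ℝ → ℝ → ℝ → ℝ → ℝ) (x y z u : ℝ) : ℝ :=
  deriv (fun s => P s y z u) x

noncomputable def partial₁ (P : ℝ → ℝ → ℝ → ℝ → ℝ) (x y z u : ℝ) : ℝ :=
  deriv (fun s => P x s z u) y

noncomputable def partial₂ (P : ℝ → ℝ → ℝ → ℝ → ℝ) (x y z u : ℝ) : ℝ :=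
  deriv (fun s => P x y s u) z

noncomputable def partial₃ (P : ℝ → ℝ → ℝ → ℝ → ℝ) (x y z u : ℝ) : ℝ :=
  deriv (fun s => P x y z s) u

section FourVariables

variable {P : ℝ → ℝ → ℝ → ℝ → ℝ} {x y z u : ℝ}

theorem partial₀_eq_fderiv (hP : DifferentiableAt ℝ (uncurry4 P) (x, y, z, u)) :
    partial₀ P x y z u = fderiv ℝ (uncurry4 P) (x, y, z, u) (1, 0, 0, 0) := by
  have hline : HasDerivAt (fun s => ((s, y, z, u) : ℝ × ℝ × ℝ × ℝ)) (1, 0, 0, 0) x :=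
    (hasDerivAt_id x).prodMk (hasDerivAt_const x _)
  exact (hP.hasFDerivAt.comp_hasDerivAt x hline).deriv

theorem partial₁_eq_fderiv (hP : DifferentiableAt ℝ (uncurry4 P) (x, y, z, u)) :
    partial₁ P x y z u = fderiv ℝ (uncurry4 P) (x, y, z, u) (0, 1, 0, 0) := by
  have hline : HasDerivAt (fun s => ((x, s, z, u) : ℝ × ℝ × ℝ × ℝ)) (0, 1, 0, 0) y :=
    (hasDerivAt_const y x).prodMk ((hasDerivAt_id y).prodMk (hasDerivAt_const y _))
  exact (hP.hasFDerivAt.comp_hasDerivAt y hline).deriv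

theorem partial₂_eq_fderiv (hP : DifferentiableAt ℝ (uncurry4 P) (x, y, z, u)) :
    partial₂ P x y z u = fderiv ℝ (uncurry4 P) (x, y, z, u) (0, 0, 1, 0) := by
  have hline : HasDerivAt (fun s => ((x, y, s, u) : ℝ × ℝ × ℝ × ℝ)) (0, 0, 1, 0) z :=
    (hasDerivAt_const z x).prodMk ((hasDerivAt_const z y).prodMk
      ((hasDerivAt_id z).prodMk (hasDerivAt_const z u)))
  exact (hP.hasFDerivAt.comp_hasDerivAt z hline).deriv

theorem partial₃_eq_fderiv (hP : DifferentiableAt ℝ (uncurry4 P) (x, y, z, u)) :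
    partial₃ P x y z u = fderiv ℝ (uncurry4 P) (x, y, z, u) (0, 0, 0, 1) := by
  have hline : HasDerivAt (fun s => ((x, y, z, s) : ℝ × ℝ × ℝ × ℝ)) (0, 0, 0, 1) u :=
    (hasDerivAt_const u x).prodMk ((hasDerivAt_const u y).prodMk
      ((hasDerivAt_const u z).prodMk (hasDerivAt_id u)))
  exact (hP.hasFDerivAt.comp_hasDerivAt u hline).deriv

theorem hasDerivAt_comp_graph {f g : ℝ → ℝ} {f' g' : ℝ}
    (hP : DifferentiableAt ℝ (uncurry4 P) (f z, g z, z, u))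
    (hf : HasDerivAt f f' z) (hg : HasDerivAt g g' z) :
    HasDerivAt (fun t => P (f t) (g t) t u)
      (f' * partial₀ P (f z) (g z) z u + g' * partial₁ P (f z) (g z) z u
        + partial₂ P (f z) (g z) z u) z := by
  have hγ : HasDerivAt (fun t => (f t, g t, t, u)) (f', g', 1, 0) z :=
    hf.prodMk (hg.prodMk ((hasDerivAt_id z).prodMk (hasDerivAt_const z u)))
  have hsplit : ((f', g', 1, 0) : ℝ × ℝ × ℝ × ℝ)
      = f' • (1, 0, 0, 0) + g' • (0, 1, 0, 0) + (0, 0, 1, 0) := by simp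
  refine (hP.hasFDerivAt.comp_hasDerivAt z hγ).congr_deriv ?_
  rw [hsplit, map_add, map_add, map_smul, map_smul, partial₀_eq_fderiv hP,
    partial₁_eq_fderiv hP, partial₂_eq_fderiv hP, smul_eq_mul, smul_eq_mul]

theorem uncurry4_partial₀_eventuallyEq (hP : ContDiffAt ℝ 2 (uncurry4 P) (x, y, z, u)) :
    uncurry4 (partial₀ P) =ᶠ[𝓝 (x, y, z, u)] fun q => fderiv ℝ (uncurry4 P) q (1, 0, 0, 0) :=
  hP.eventually_differentiableAt.mono fun _ h => partial₀_eq_fderiv h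

theorem uncurry4_partial₁_eventuallyEq (hP : ContDiffAt ℝ 2 (uncurry4 P) (x, y, z, u)) :
    uncurry4 (partial₁ P) =ᶠ[𝓝 (x, y, z, u)] fun q => fderiv ℝ (uncurry4 P) q (0, 1, 0, 0) :=
  hP.eventually_differentiableAt.mono fun _ h => partial₁_eq_fderiv h

theorem uncurry4_partial₃_eventuallyEq (hP : ContDiffAt ℝ 2 (uncurry4 P) (x, y, z, u)) :
    uncurry4 (partial₃ P) =ᶠ[𝓝 (x, y, z, u)] fun q => fderiv ℝ (uncurry4 P) q (0, 0, 0, 1) :=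
  hP.eventually_differentiableAt.mono fun _ h => partial₃_eq_fderiv h

theorem differentiableAt_uncurry4_partial₀ (hP : ContDiffAt ℝ 2 (uncurry4 P) (x, y, z, u)) :
    DifferentiableAt ℝ (uncurry4 (partial₀ P)) (x, y, z, u) :=
  hP.differentiableAt_of_eventuallyEq_fderiv_apply (uncurry4_partial₀_eventuallyEq hP)

theorem differentiableAt_uncurry4_partial₁ (hP : ContDiffAt ℝ 2 (uncurry4 P) (x, y, z, u)) :
    DifferentiableAt ℝ (uncurry4 (partial₁ P)) (x, y, z, u) :=
  hP.differentiableAt_of_eventuallyEq_fderiv_apply (uncurry4_partial₁_eventuallyEq hP)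

theorem differentiableAt_uncurry4_partial₃ (hP : ContDiffAt ℝ 2 (uncurry4 P) (x, y, z, u)) :
    DifferentiableAt ℝ (uncurry4 (partial₃ P)) (x, y, z, u) :=
  hP.differentiableAt_of_eventuallyEq_fderiv_apply (uncurry4_partial₃_eventuallyEq hP)

theorem partial₀_partial₃_comm (hP : ContDiffAt ℝ 2 (uncurry4 P) (x, y, z, u)) :
    partial₀ (partial₃ P) x y z u = partial₃ (partial₀ P) x y z u := by
  rw [partial₀_eq_fderiv (differentiableAt_uncurry4_partial₃ hP),
    partial₃_eq_fderiv (differentiableAt_uncurry4_partial₀ hP)]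
  exact hP.fderiv_apply_comm_of_eventuallyEq (uncurry4_partial₃_eventuallyEq hP)
    (uncurry4_partial₀_eventuallyEq hP)

theorem partial₁_partial₃_comm (hP : ContDiffAt ℝ 2 (uncurry4 P) (x, y, z, u)) :
    partial₁ (partial₃ P) x y z u = partial₃ (partial₁ P) x y z u := by
  rw [partial₁_eq_fderiv (differentiableAt_uncurry4_partial₃ hP),
    partial₃_eq_fderiv (differentiableAt_uncurry4_partial₁ hP)]
  exact hP.fderiv_apply_comm_of_eventuallyEq (uncurry4_partial₃_eventuallyEq hP)
    (uncurry4_partial₁_eventuallyEq hP)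

end FourVariables

/-- The key determinant computation: if `P(f̄,ȳ,z,u) = 0` and `P_{x0}(f̄,ȳ,z,u) = 0`
identically near `(z0,u0)` and `P̄(z,u) = P_u(f̄(z,u),ȳ(z,u),z,u)`, then
`P̄_z(z0,u0) = -Δ/(P_{x1}·P_{x0x0})` where `Δ` is the determinant of the matrix with
rows `(P_{x0}, P_{x1}, P_z)`, `(P_{x0x0}, P_{x0x1}, P_{x0z})`,
`(P_{x0u}, P_{x1u}, P_{uz})` at `p`; in particular `P̄_z(z0,u0) ≠ 0 ↔ Δ ≠ 0`. -/
theorem reduced_equation_z_derivative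
    (P : ℝ → ℝ → ℝ → ℝ → ℝ) (fb yb : ℝ → ℝ → ℝ) (z0 u0 : ℝ)
    (hPa : AnalyticAt ℝ
      (fun q : ℝ × ℝ × ℝ × ℝ => P q.1 q.2.1 q.2.2.1 q.2.2.2)
      (fb z0 u0, yb z0 u0, z0, u0))
    (hfa : AnalyticAt ℝ (fun q : ℝ × ℝ => fb q.1 q.2) (z0, u0))
    (hya : AnalyticAt ℝ (fun q : ℝ × ℝ => yb q.1 q.2) (z0, u0))
    (hPx1 : deriv (fun r => P (fb z0 u0) r z0 u0) (yb z0 u0) ≠ 0)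
    (hPx0x0 : deriv (fun s => deriv (fun t => P t (yb z0 u0) z0 u0) s)
      (fb z0 u0) ≠ 0)
    (heq : ∃ δ : ℝ, 0 < δ ∧ ∀ z u : ℝ, |z - z0| < δ → |u - u0| < δ →
      P (fb z u) (yb z u) z u = 0 ∧
      deriv (fun s => P s (yb z u) z u) (fb z u) = 0)
    (Δ : ℝ)
    (hΔ : Δ = Matrix.det
      !![deriv (fun s => P s (yb z0 u0) z0 u0) (fb z0 u0),
          deriv (fun r => P (fb z0 u0) r z0 u0) (yb z0 u0),
          deriv (fun t => P (fb z0 u0) (yb z0 u0) t u0) z0;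
        deriv (fun s => deriv (fun t => P t (yb z0 u0) z0 u0) s) (fb z0 u0),
          deriv (fun r => deriv (fun s => P s r z0 u0) (fb z0 u0)) (yb z0 u0),
          deriv (fun t => deriv (fun s => P s (yb z0 u0) t u0) (fb z0 u0)) z0;
        deriv (fun v => deriv (fun s => P s (yb z0 u0) z0 v) (fb z0 u0)) u0,
          deriv (fun v => deriv (fun r => P (fb z0 u0) r z0 v) (yb z0 u0)) u0,
          deriv (fun t => deriv (fun v => P (fb z0 u0) (yb z0 u0) t v) u0) z0]) :
    deriv (fun t => deriv (fun v => P (fb t u0) (yb t u0) t v) u0) z0 =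
      -Δ / (deriv (fun r => P (fb z0 u0) r z0 u0) (yb z0 u0) *
        deriv (fun s => deriv (fun t => P t (yb z0 u0) z0 u0) s) (fb z0 u0)) ∧
    (deriv (fun t => deriv (fun v => P (fb t u0) (yb t u0) t v) u0) z0 ≠ 0 ↔
      Δ ≠ 0) := by
  obtain ⟨δ, hδ, hsol⟩ := heq
  have hsol_near : ∀ᶠ t in 𝓝 z0,
      P (fb t u0) (yb t u0) t u0 = 0 ∧ partial₀ P (fb t u0) (yb t u0) t u0 = 0 :=
    (eventually_abs_sub_lt z0 hδ).mono fun t ht => hsol t u0 ht (by simpa using hδ)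
  have hf := (differentiableAt_fst_slice hfa.differentiableAt).hasDerivAt
  have hy := (differentiableAt_fst_slice hya.differentiableAt).hasDerivAt
  have hP : ContDiffAt ℝ 2 (uncurry4 P) (fb z0 u0, yb z0 u0, z0, u0) := hPa.contDiffAt
  have hP_graph := (hasDerivAt_comp_graph (hP.differentiableAt two_ne_zero) hf hy)
    |>.eq_zero_of_eventually_eq_zero (hsol_near.mono fun _ h => h.1)
  have hP₀_graph := (hasDerivAt_comp_graph (differentiableAt_uncurry4_partial₀ hP) hf hy)
    |>.eq_zero_of_eventually_eq_zero (hsol_near.mono fun _ h => h.2)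
  have hP₃_graph := (hasDerivAt_comp_graph (differentiableAt_uncurry4_partial₃ hP) hf hy).deriv
  refine eq_neg_det_div_of_annihilated hΔ hsol_near.self_of_nhds.2 hP_graph hP₀_graph
    (hP₃_graph.trans ?_) hPx1 hPx0x0
  rw [partial₀_partial₃_comm hP, partial₁_partial₃_comm hP]
  rfl
end

section
/- Let f ∈ ℝ[[z]] be the formal power series with coefficients [z^n] f = 2·(2n)!·3^n / ((n+2)!·n!) for all n ≥ 0 (the numbers of rooted planar maps with n edges). Then (54·z²·f + 1 − 18·z)² = (1 − 12·z)³ as formal power series; equivalently, f is the power series expansion of (18z − 1 + (1 − 12z)^{3/2})/(54z²). -/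
/-!
Put `g = 54z²f + 1 - 18z`. The recurrence `(n + 3) Mₙ₊₁ = 6 (2n + 1) Mₙ` of the map counts is
the coefficient form of the linear differential equation `(1 - 12z) g' = -18 g`. Hence `g²` and
`(1 - 12z)³` both solve `(1 - 12z) y' = -36 y` with `y(0) = 1`, and this equation determines a power
series solution from its constant term.
-/

open PowerSeries

namespace PowerSeries

section

variable {R : Type*} [CommRing R]

theorem coeff_one_sub_C_mul_X_mul_derivative (c : R) (g : R⟦X⟧) (n : ℕ) :
    coeff n ((1 - C c * X) * d⁄dX R g) = coeff (n + 1) g * (n + 1) - c * n * coeff n g := by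
  rw [sub_mul, one_mul, map_sub, coeff_derivative, mul_assoc, coeff_C_mul]
  cases n with
  | zero => simp
  | succ n => rw [coeff_succ_X_mul, coeff_derivative]; push_cast; ring

theorem one_sub_C_mul_X_mul_derivative_eq_iff (a c : R) (g : R⟦X⟧) :
    (1 - C c * X) * d⁄dX R g = C a * g ↔
      ∀ n : ℕ, coeff (n + 1) g * (n + 1) = (c * n + a) * coeff n g := by
  refine PowerSeries.ext_iff.trans (forall_congr' fun n => ?_)
  rw [coeff_one_sub_C_mul_X_mul_derivative, coeff_C_mul, sub_eq_iff_eq_add]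
  ring_nf

theorem one_sub_C_mul_X_mul_derivative_pow {a c : R} {u : R⟦X⟧}
    (hu : (1 - C c * X) * d⁄dX R u = C a * u) (k : ℕ) :
    (1 - C c * X) * d⁄dX R (u ^ k) = C (k * a) * u ^ k := by
  cases k with
  | zero => simp
  | succ k =>
    rw [Derivation.leibniz_pow, smul_eq_mul, nsmul_eq_mul, Nat.add_sub_cancel,
      mul_left_comm, mul_left_comm _ (u ^ k), hu, map_mul, map_natCast]
    ring

theorem one_sub_C_mul_X_mul_derivative_self (c : R) :
    (1 - C c * X) * d⁄dX R (1 - C c * X) = C (-c) * (1 - C c * X) := by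
  simp only [map_sub, Derivation.map_one_eq_zero, Derivation.leibniz, derivative_C,
    derivative_X, smul_eq_mul, map_neg]
  ring

end

section

variable {R : Type*} [CommRing R] [IsDomain R] [CharZero R]

theorem eq_zero_of_one_sub_C_mul_X_mul_derivative {a c : R} {h : R⟦X⟧}
    (hh : (1 - C c * X) * d⁄dX R h = C a * h) (h0 : constantCoeff h = 0) : h = 0 := by
  rw [one_sub_C_mul_X_mul_derivative_eq_iff] at hh
  ext n
  induction n with
  | zero => simpa using h0
  | succ n ih =>
    have := hh n
    rw [ih, map_zero, mul_zero] at this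
    simpa [Nat.cast_add_one_ne_zero] using this

theorem eq_of_one_sub_C_mul_X_mul_derivative {a c : R} {u v : R⟦X⟧}
    (hu : (1 - C c * X) * d⁄dX R u = C a * u) (hv : (1 - C c * X) * d⁄dX R v = C a * v)
    (h0 : constantCoeff u = constantCoeff v) : u = v := by
  refine sub_eq_zero.mp (eq_zero_of_one_sub_C_mul_X_mul_derivative (a := a) (c := c) ?_ ?_)
  · rw [map_sub, mul_sub, hu, hv, mul_sub]
  · rw [map_sub, h0, sub_self]

end

end PowerSeries

noncomputable def rootedPlanarMaps (n : ℕ) : ℝ :=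
  2 * (Nat.factorial (2 * n) : ℝ) * 3 ^ n /
    ((Nat.factorial (n + 2) : ℝ) * (Nat.factorial n : ℝ))

theorem rootedPlanarMaps_zero : rootedPlanarMaps 0 = 1 := by
  norm_num [rootedPlanarMaps]

theorem rootedPlanarMaps_succ (n : ℕ) :
    (n + 3) * rootedPlanarMaps (n + 1) = 6 * (2 * n + 1) * rootedPlanarMaps n := by
  simp only [rootedPlanarMaps, Nat.mul_succ, Nat.factorial_succ,
    show n + 1 + 2 = n + 2 + 1 from rfl]
  push_cast
  field_simp
  ring

theorem one_sub_C_mul_X_mul_derivative_planarMaps (f : ℝ⟦X⟧)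
    (hf : ∀ n, coeff n f = rootedPlanarMaps n) :
    (1 - C 12 * X) * d⁄dX ℝ (C 54 * X ^ 2 * f + 1 - C 18 * X) =
      C (-18) * (C 54 * X ^ 2 * f + 1 - C 18 * X) := by
  rw [one_sub_C_mul_X_mul_derivative_eq_iff]
  simp only [map_sub, map_add, mul_right_comm _ (X ^ 2), coeff_mul_X_pow', coeff_C_mul, coeff_one,
    coeff_X, hf]
  rintro (_ | _ | n)
  · norm_num
  · norm_num [rootedPlanarMaps_zero]
  · norm_num [show n + 1 + 1 + 1 - 2 = n + 1 by omega, show n + 1 + 1 - 2 = n by omega]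
    linear_combination 54 * rootedPlanarMaps_succ n

/-- The generating function `f(z) = Σ M_n zⁿ` of rooted planar maps, with
`M_n = 2·(2n)!·3ⁿ/((n+2)!·n!)`, satisfies `(54z²f + 1 - 18z)² = (1 - 12z)³`;
equivalently, `f` is the power series expansion of
`(18z - 1 + (1-12z)^{3/2})/(54z²)`. -/
theorem planar_maps_generating_function
    (f : PowerSeries ℝ)
    (hf : ∀ n : ℕ, PowerSeries.coeff n f =
      2 * (Nat.factorial (2 * n) : ℝ) * 3 ^ n /
        ((Nat.factorial (n + 2) : ℝ) * (Nat.factorial n : ℝ))) :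
    (54 * PowerSeries.X ^ 2 * f + 1 - 18 * PowerSeries.X) ^ 2 =
      (1 - 12 * PowerSeries.X) ^ 3 := by
  simp only [← map_ofNat C]
  have hg := one_sub_C_mul_X_mul_derivative_pow (one_sub_C_mul_X_mul_derivative_planarMaps f hf) 2
  have hq := one_sub_C_mul_X_mul_derivative_pow (one_sub_C_mul_X_mul_derivative_self (12 : ℝ)) 3
  refine eq_of_one_sub_C_mul_X_mul_derivative hg (by convert hq using 3; norm_num) ?_
  simp
end

section
/- The sequence M_n = 2·(2n)!·3^n / ((n+2)!·n!) (the number of rooted planar maps with n edges) satisfies M_n ∼ (2/√π)·n^{−5/2}·12^n; that is, the ratio M_n / (n^{−5/2}·12^n) converges to 2/√π as n → ∞. -/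
/-!
Since `M_n = 2·3ⁿ·C(2n,n)/((n+1)(n+2))`, everything reduces to the central binomial asymptotics
`C(2n,n) ~ 4ⁿ/√(πn)`. Writing `n! = sₙ·√(2n)·(n/e)ⁿ` with Stirling's sequence `sₙ → √π`, the
exponential and polynomial factors of `C(2n,n) = (2n)!/(n!)²` cancel exactly up to `4ⁿ/√n`,
leaving `s₂ₙ/sₙ² → 1/√π`.
-/

open Filter Real Topology Nat Stirling

lemma centralBinom_eq_stirlingSeq {n : ℕ} (hn : n ≠ 0) :
    (centralBinom n : ℝ) = stirlingSeq (2 * n) / stirlingSeq n ^ 2 * 4 ^ n / √n := by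
  have hn0 : (0 : ℝ) < n := by positivity
  have hsqrt : √(2 * ((2 * n : ℕ) : ℝ)) = 2 * √n := by
    rw [show (2 : ℝ) * ((2 * n : ℕ) : ℝ) = 2 ^ 2 * n by push_cast; ring,
      sqrt_mul (by norm_num), sqrt_sq (by norm_num)]
  have hpow : (((2 * n : ℕ) : ℝ) / exp 1) ^ (2 * n) = 4 ^ n * ((n / exp 1) ^ n) ^ 2 := by
    push_cast
    rw [mul_div_assoc, mul_pow, pow_mul, ← pow_mul _ n 2, mul_comm n 2]
    norm_num
  have hssq : √(2 * (n : ℝ)) ^ 2 = 2 * n := sq_sqrt (by positivity)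
  have hsn : √(n : ℝ) ^ 2 = n := sq_sqrt hn0.le
  rw [centralBinom_eq_two_mul_choose, cast_choose ℝ (by omega), show 2 * n - n = n by omega]
  simp only [stirlingSeq, hsqrt, hpow]
  field_simp
  rw [hssq, hsn]

lemma tendsto_centralBinom_mul_sqrt_div_four_pow :
    Tendsto (fun n : ℕ => (centralBinom n : ℝ) * √n / 4 ^ n) atTop (𝓝 (1 / √π)) := by
  have hπ : √π ≠ 0 := (sqrt_pos.mpr pi_pos).ne'
  have htwo : Tendsto (fun n : ℕ => stirlingSeq (2 * n)) atTop (𝓝 √π) :=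
    tendsto_stirlingSeq_sqrt_pi.comp (tendsto_id.const_mul_atTop' two_pos)
  have hlim : Tendsto (fun n : ℕ => stirlingSeq (2 * n) / stirlingSeq n ^ 2) atTop
      (𝓝 (√π / √π ^ 2)) :=
    htwo.div (tendsto_stirlingSeq_sqrt_pi.pow 2) (pow_ne_zero 2 hπ)
  rw [show √π / √π ^ 2 = 1 / √π by field_simp] at hlim
  refine hlim.congr' ?_
  filter_upwards [eventually_ne_atTop 0] with n hn
  have hsqrt : √(n : ℝ) ≠ 0 := by positivity
  rw [centralBinom_eq_stirlingSeq hn]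
  field_simp

lemma rpow_neg_five_div_two {x : ℝ} (hx : 0 ≤ x) : x ^ (-(5 : ℝ) / 2) = (x ^ 2 * √x)⁻¹ := by
  rw [neg_div, rpow_neg hx, show (5 : ℝ) / 2 = 2 + 1 / 2 by norm_num,
    rpow_add' hx (by norm_num), sqrt_eq_rpow, rpow_two]

lemma two_mul_factorial_mul_three_pow_div_eq_centralBinom (n : ℕ) :
    2 * ((2 * n)! : ℝ) * 3 ^ n / ((n + 2)! * n !) =
      2 * 3 ^ n * centralBinom n / ((n + 1) * (n + 2)) := by
  rw [centralBinom_eq_two_mul_choose, cast_choose ℝ (by omega), show 2 * n - n = n by omega]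
  push_cast [factorial_succ]
  field_simp
  ring

/-- The number `M_n = 2·(2n)!·3ⁿ/((n+2)!·n!)` of rooted planar maps with `n` edges
satisfies `M_n ∼ (2/√π)·n^{-5/2}·12ⁿ`. -/
theorem planar_maps_asymptotics
    (M : ℕ → ℝ)
    (hM : ∀ n : ℕ, M n =
      2 * (Nat.factorial (2 * n) : ℝ) * 3 ^ n /
        ((Nat.factorial (n + 2) : ℝ) * (Nat.factorial n : ℝ))) :
    Filter.Tendsto
      (fun n : ℕ => M n / ((n : ℝ) ^ (-(5 : ℝ) / 2) * 12 ^ n))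
      Filter.atTop (nhds (2 / Real.sqrt Real.pi)) := by
  have hlim : Tendsto (fun n : ℕ => 2 * ((centralBinom n : ℝ) * √n / 4 ^ n) *
      (n / (n + 1) * (n / (n + 2)))) atTop (𝓝 (2 / √π)) := by
    simpa [div_eq_mul_inv] using (tendsto_centralBinom_mul_sqrt_div_four_pow.const_mul 2).mul
      ((tendsto_natCast_div_add_atTop (1 : ℝ)).mul (tendsto_natCast_div_add_atTop (2 : ℝ)))
  refine hlim.congr' ?_
  filter_upwards [eventually_ne_atTop 0] with n hn
  have hsqrt : √(n : ℝ) ≠ 0 := by positivity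
  rw [hM, two_mul_factorial_mul_three_pow_div_eq_centralBinom, rpow_neg_five_div_two n.cast_nonneg,
    show (12 : ℝ) ^ n = 3 ^ n * 4 ^ n by rw [← mul_pow]; norm_num]
  field_simp
end

section
/- Let M(z,u) be the formal power series solution of the linear catalytic equation with Q0(z,u) = 1, Q1(z,u) = u + 1, Q2(z,u) = 1 (the equation for Motzkin paths: M(z,u) = 1 + z(u+1)M(z,u) + z·(M(z,u) − M(z,0))/u). Then M(z,0) satisfies the algebraic equation z²·M(z,0)² − (1 − z)·M(z,0) + 1 = 0 in ℝ[[z]], and its coefficients are the Motzkin numbers: [z^n] M(z,0) = Σ_{k=0}^{⌊n/2⌋} n! / ((n − 2k)!·k!·(k+1)!) for all n ≥ 0. -/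
noncomputable section

/-!
Writing `a n k = [zⁿ uᵏ] M`, the catalytic equation says exactly that `a` obeys the Motzkin-path
recurrence `a (n+1) k = a n (k-1) + a n k + a n (k+1)` with `a 0 = δ₀`, so `a n k` counts Motzkin
paths of length `n` ending at height `k`. Cutting such a path at its last visits of the heights
`0, …, k` gives `∑ₙ a n k zⁿ = zᵏ Fᵏ⁺¹` for `F = M(z,0)`; for `k = 1` together with
`a (n+1) 0 = a n 0 + a n 1` this is `F = 1 + zF + z²F²`. The coefficients follow from an explicit
solution of the recurrence, whose `k = 0` column is the Motzkin sum.
-/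

open PowerSeries

structure IsMotzkinTriangle {R : Type*} [Semiring R] (a : ℕ → ℕ → R) : Prop where intro ::
  zero_zero : a 0 0 = 1
  zero_succ : ∀ k, a 0 (k + 1) = 0
  succ_zero : ∀ n, a (n + 1) 0 = a n 0 + a n 1
  succ_succ : ∀ n k, a (n + 1) (k + 1) = a n k + a n (k + 1) + a n (k + 2)

namespace IsMotzkinTriangle

theorem unique {R : Type*} [Semiring R] {a b : ℕ → ℕ → R}
    (ha : IsMotzkinTriangle a) (hb : IsMotzkinTriangle b) : a = b := by
  funext n
  induction n with
  | zero =>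
    funext k
    cases k <;> simp only [ha.zero_zero, hb.zero_zero, ha.zero_succ, hb.zero_succ]
  | succ n ih =>
    funext k
    cases k <;> simp only [ha.succ_zero, hb.succ_zero, ha.succ_succ, hb.succ_succ, ih]

variable {R : Type*} [CommRing R] {a : ℕ → ℕ → R}

theorem coeff_succ_mk_sub_eq_zero (ha : IsMotzkinTriangle a) {n : ℕ}
    (hn : ∀ k, a n k = coeff n (X ^ k * mk (a · 0) ^ (k + 1))) :
    coeff (n + 1) (mk (a · 0) - (1 + X * mk (a · 0) + X ^ 2 * mk (a · 0) ^ 2)) = 0 := by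
  have h0 := hn 0
  have h1 := hn 1
  rw [pow_zero, one_mul, pow_one] at h0
  rw [pow_one] at h1
  rw [map_sub, map_add, map_add, coeff_one, if_neg n.succ_ne_zero, coeff_succ_X_mul, pow_two X,
    mul_assoc, coeff_succ_X_mul, ← h0, ← h1, coeff_mk, ha.succ_zero]
  ring

theorem coeff_X_pow_mul_pow (ha : IsMotzkinTriangle a) (n k : ℕ) :
    a n k = coeff n (X ^ k * mk (a · 0) ^ (k + 1)) := by
  set F := mk (a · 0)
  induction n using Nat.strong_induction_on generalizing k with
  | _ n ih =>
  rcases n with _ | n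
  · cases k
    · simp [F, ha.zero_zero]
    · simp [ha.zero_succ, pow_succ', mul_assoc]
  rcases k with _ | k
  · simp [F]
  have hdvd : X ^ (n + 1) ∣ F - (1 + X * F + X ^ 2 * F ^ 2) := by
    refine X_pow_dvd_iff.mpr fun i hi => ?_
    rcases i with _ | i
    · simp [F, ha.zero_zero]
    · exact ha.coeff_succ_mk_sub_eq_zero (ih i (by omega))
  have hstep : X ^ (k + 1) * F ^ (k + 2) =
      X * (X ^ k * F ^ (k + 1) + X ^ (k + 1) * F ^ (k + 2) + X ^ (k + 2) * F ^ (k + 3)) +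
        X ^ (k + 1) * F ^ (k + 1) * (F - (1 + X * F + X ^ 2 * F ^ 2)) := by
    ring
  have hvanish :
      coeff (n + 1) (X ^ (k + 1) * F ^ (k + 1) * (F - (1 + X * F + X ^ 2 * F ^ 2))) = 0 := by
    obtain ⟨c, hc⟩ := hdvd
    rw [hc, show X ^ (k + 1) * F ^ (k + 1) * (X ^ (n + 1) * c) =
        X ^ (n + 2) * (X ^ k * F ^ (k + 1) * c) by ring, coeff_X_pow_mul', if_neg (by omega)]
  rw [hstep, map_add, hvanish, add_zero, coeff_succ_X_mul, map_add, map_add,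
    ← ih n n.lt_succ_self, ← ih n n.lt_succ_self, ← ih n n.lt_succ_self, ha.succ_succ]

theorem mk_eq (ha : IsMotzkinTriangle a) :
    mk (a · 0) = 1 + X * mk (a · 0) + X ^ 2 * mk (a · 0) ^ 2 := by
  rw [← sub_eq_zero]
  ext i
  rcases i with _ | i
  · simp [ha.zero_zero]
  · exact ha.coeff_succ_mk_sub_eq_zero fun k => ha.coeff_X_pow_mul_pow i k

end IsMotzkinTriangle

section MotzkinTerm

open Nat

/-- The ballot factor `(k+1)/(j+k+1)` times the multinomial `n!/(j!(j+k)!(n-k-2j)!)`: the number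
of Motzkin paths of length `n` ending at height `k` with `j` down-steps. -/
def motzkinTerm (n k j : ℕ) : ℝ :=
  if k + 2 * j ≤ n then n ! * (k + 1) / (j ! * (j + k + 1)! * (n - k - 2 * j)!) else 0

theorem motzkinTerm_of_add_eq {n k j m : ℕ} (h : k + 2 * j + m = n) :
    motzkinTerm n k j = n ! * (k + 1) / (j ! * (j + k + 1)! * m !) := by
  rw [motzkinTerm, if_pos (by omega), show n - k - 2 * j = m by omega]

theorem motzkinTerm_of_lt {n k j : ℕ} (h : n < k + 2 * j) : motzkinTerm n k j = 0 :=
  if_neg (by omega)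

/-! Contributions of a last up-, flat- or down-step to `motzkinTerm (n + 1) k j`, over the common
denominator `j! (j+k+1)! m!`. -/

section LastStep

variable {n k j m : ℕ} (h : n + 1 = k + 2 * j + m)
include h

theorem motzkinTerm_up :
    (if k = 0 then 0 else motzkinTerm n (k - 1) j) =
      n ! * (k * (j + k + 1)) / (j ! * (j + k + 1)! * m !) := by
  rcases k with _ | k
  · simp
  rw [if_neg k.succ_ne_zero, Nat.add_sub_cancel, motzkinTerm_of_add_eq (m := m) (by omega),
    show j + (k + 1) + 1 = (j + k + 1) + 1 by ring, factorial_succ (j + k + 1)]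
  push_cast
  field_simp
  ring

theorem motzkinTerm_flat :
    motzkinTerm n k j = n ! * ((k + 1) * m) / (j ! * (j + k + 1)! * m !) := by
  rcases m with _ | m
  · simp [motzkinTerm_of_lt (by omega : n < k + 2 * j)]
  rw [motzkinTerm_of_add_eq (m := m) (by omega), factorial_succ m]
  push_cast
  field_simp

theorem motzkinTerm_down :
    (if j = 0 then 0 else motzkinTerm n (k + 1) (j - 1)) =
      n ! * ((k + 2) * j) / (j ! * (j + k + 1)! * m !) := by
  rcases j with _ | j
  · simp
  rw [if_neg j.succ_ne_zero, Nat.add_sub_cancel, motzkinTerm_of_add_eq (m := m) (by omega),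
    show j + (k + 1) + 1 = j + 1 + k + 1 by ring, factorial_succ j]
  push_cast
  field_simp
  ring

end LastStep

theorem motzkinTerm_succ (n k j : ℕ) :
    motzkinTerm (n + 1) k j =
      (if k = 0 then 0 else motzkinTerm n (k - 1) j) + motzkinTerm n k j +
        (if j = 0 then 0 else motzkinTerm n (k + 1) (j - 1)) := by
  rcases lt_or_ge (n + 1) (k + 2 * j) with hlt | hle
  · rw [motzkinTerm_of_lt hlt, motzkinTerm_of_lt (by omega : n < k + 2 * j),
      motzkinTerm_of_lt (by omega : n < k - 1 + 2 * j),
      motzkinTerm_of_lt (by omega : n < k + 1 + 2 * (j - 1))]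
    simp
  obtain ⟨m, hm⟩ := Nat.exists_eq_add_of_le hle
  have hcount : ((n + 1 : ℕ) : ℝ) * (k + 1) = k * (j + k + 1) + (k + 1) * m + (k + 2) * j := by
    rw [hm]; push_cast; ring
  rw [motzkinTerm_up hm, motzkinTerm_flat hm, motzkinTerm_down hm, ← add_div, ← add_div,
    motzkinTerm_of_add_eq hm.symm, factorial_succ, cast_mul, ← mul_add, ← mul_add, ← hcount]
  ring

def motzkinTriangle (n k : ℕ) : ℝ :=
  ∑ j ∈ Finset.range (n + 1), motzkinTerm n k j

theorem motzkinTriangle_succ (n k : ℕ) :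
    motzkinTriangle (n + 1) k =
      (if k = 0 then 0 else motzkinTriangle n (k - 1)) + motzkinTriangle n k +
        motzkinTriangle n (k + 1) := by
  have trim (k' : ℕ) :
      ∑ j ∈ Finset.range (n + 2), motzkinTerm n k' j = motzkinTriangle n k' := by
    rw [Finset.sum_range_succ, motzkinTerm_of_lt (by omega), add_zero, motzkinTriangle]
  have up : ∑ j ∈ Finset.range (n + 2), (if k = 0 then 0 else motzkinTerm n (k - 1) j) =
      if k = 0 then 0 else motzkinTriangle n (k - 1) := by
    split_ifs <;> simp [trim]
  have down :
      ∑ j ∈ Finset.range (n + 2), (if j = 0 then 0 else motzkinTerm n (k + 1) (j - 1)) =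
        motzkinTriangle n (k + 1) := by
    simp [Finset.sum_range_succ', motzkinTriangle]
  rw [motzkinTriangle]
  simp only [motzkinTerm_succ, Finset.sum_add_distrib]
  rw [up, down, trim]

theorem isMotzkinTriangle_motzkinTriangle : IsMotzkinTriangle motzkinTriangle where
  zero_zero := by simp [motzkinTriangle, motzkinTerm]
  zero_succ k := by simp [motzkinTriangle, motzkinTerm]
  succ_zero n := by simpa using motzkinTriangle_succ n 0
  succ_succ n k := by simpa using motzkinTriangle_succ n (k + 1)

theorem motzkinTriangle_zero_right (n : ℕ) :
    motzkinTriangle n 0 =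
      ∑ k ∈ Finset.range (n / 2 + 1), (n ! : ℝ) / ((n - 2 * k)! * k ! * (k + 1)!) := by
  rw [motzkinTriangle, Finset.eventually_constant_sum
    (fun j (hj : j ≥ n / 2 + 1) => motzkinTerm_of_lt (by omega)) (by omega : n / 2 + 1 ≤ n + 1)]
  refine Finset.sum_congr rfl fun k hk => ?_
  rw [motzkinTerm_of_add_eq (m := n - 2 * k) (by rw [Finset.mem_range] at hk; omega)]
  push_cast
  ring

end MotzkinTerm

theorem coeff_zero_of_motzkin_eq {M : PowerSeries (PowerSeries ℝ)}
    (hM : M = 1 + X * M * (C X + 1) + X * divDiff M) : coeff 0 M = 1 := by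
  rw [hM]
  simp

theorem coeff_succ_of_motzkin_eq {M : PowerSeries (PowerSeries ℝ)}
    (hM : M = 1 + X * M * (C X + 1) + X * divDiff M) (n : ℕ) :
    coeff (n + 1) M = coeff n M * X + coeff n M + divU (coeff n M) := by
  conv_lhs => rw [hM]
  rw [map_add, map_add, coeff_one, if_neg n.succ_ne_zero, mul_assoc, coeff_succ_X_mul,
    coeff_succ_X_mul, mul_add_one, map_add, coeff_mul_C, divDiff, coeff_mk, zero_add]

theorem isMotzkinTriangle_coeff_of_motzkin_eq {M : PowerSeries (PowerSeries ℝ)}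
    (hM : M = 1 + X * M * (C X + 1) + X * divDiff M) :
    IsMotzkinTriangle fun n k => coeff k (coeff n M) where
  zero_zero := by simp [coeff_zero_of_motzkin_eq hM]
  zero_succ k := by simp [coeff_zero_of_motzkin_eq hM]
  succ_zero n := by simp [coeff_succ_of_motzkin_eq hM, divU]
  succ_succ n k := by simp [coeff_succ_of_motzkin_eq hM, divU, coeff_succ_mul_X]

theorem atU0_eq_mk (M : PowerSeries (PowerSeries ℝ)) :
    atU0 M = mk fun n => coeff 0 (coeff n M) := by
  ext n
  simp [atU0]

/-- **Motzkin paths.**  The solution `M(z,u)` of the linear catalytic equation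
`M(z,u) = 1 + z(u+1)M(z,u) + z(M(z,u)-M(z,0))/u` (the case `Q0 = 1`, `Q1 = u+1`,
`Q2 = 1`) has `M(z,0)` satisfying `z²M(z,0)² - (1-z)M(z,0) + 1 = 0`, and its
coefficients are the Motzkin numbers
`[zⁿ]M(z,0) = Σ_{k=0}^{⌊n/2⌋} n!/((n-2k)!·k!·(k+1)!)`. -/
theorem motzkin_catalytic
    (M : PowerSeries (PowerSeries ℝ))
    (hM : M = 1 + PowerSeries.X * M *
        (PowerSeries.C (R := PowerSeries ℝ) PowerSeries.X + 1) +
      PowerSeries.X * divDiff M) :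
    PowerSeries.X ^ 2 * atU0 M ^ 2 - (1 - PowerSeries.X) * atU0 M + 1 = 0 ∧
    ∀ n : ℕ, PowerSeries.coeff (R := ℝ) n (atU0 M) =
      ∑ k ∈ Finset.range (n / 2 + 1),
        (Nat.factorial n : ℝ) /
          ((Nat.factorial (n - 2 * k) : ℝ) * (Nat.factorial k : ℝ) *
            (Nat.factorial (k + 1) : ℝ)) := by
  have htri := isMotzkinTriangle_coeff_of_motzkin_eq hM
  rw [atU0_eq_mk]
  refine ⟨by linear_combination -htri.mk_eq, fun n => ?_⟩
  rw [coeff_mk, congrFun₂ (htri.unique isMotzkinTriangle_motzkinTriangle) n 0,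
    motzkinTriangle_zero_right]
end
end

section
/- Let D(z,x) = 768x⁴z⁴ − 1536x³z⁴ − 512x³z³ + 2304x²z⁴ + 768x²z³ − 1536xz⁴ + 96x²z² + 768xz³ + 768z⁴ − 96xz² − 512z³ + 96z² − 1. Suppose ρ is a real-analytic function on a neighborhood of x = 1 with ρ(1) = 1/12 and D(ρ(x), x) = 0 identically near x = 1. Then ρ'(1) = −1/24 and ρ''(1) = 19/384; consequently μ := −ρ'(1)/ρ(1) = 1/2 and σ² := μ + μ² − ρ''(1)/ρ(1) = 5/32. -/
/-!
Implicit differentiation, twice. Along the graph `y ↦ (ρ y, y)` the polynomial `D` vanishes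
identically, so the first two derivatives of `y ↦ D(ρ y, y)` vanish at `1`:
`D_z ρ' + D_x = 0` and `D_zz ρ'² + 2 D_zx ρ' + D_xx + D_z ρ'' = 0`. At `(z, x) = (1/12, 1)` one has
`D_z = 256/9`, `D_x = 32/27`, `D_zz = 512`, `D_zx = 320/9`, `D_xx = 2/3`, and since `D_z ≠ 0` these two
linear equations determine `ρ'(1) = -1/24` and then `ρ''(1) = 19/384`.
-/

noncomputable section

/-- The discriminant polynomial whose root `z = ρ(x)` is the singularity of the
generating function `M(z,x,1)` of rooted planar maps counted by edges `z` and
vertices `x`. -/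
def Dpoly (z x : ℝ) : ℝ :=
  768 * x ^ 4 * z ^ 4 - 1536 * x ^ 3 * z ^ 4 - 512 * x ^ 3 * z ^ 3 +
    2304 * x ^ 2 * z ^ 4 + 768 * x ^ 2 * z ^ 3 - 1536 * x * z ^ 4 +
    96 * x ^ 2 * z ^ 2 + 768 * x * z ^ 3 + 768 * z ^ 4 - 96 * x * z ^ 2 -
    512 * z ^ 3 + 96 * z ^ 2 - 1

open Filter Topology MvPolynomial

theorem HasDerivAt.eq_zero_of_eventually_eq_zero_s19 {𝕜 : Type*} [NontriviallyNormedField 𝕜]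
    {g : 𝕜 → 𝕜} {g' x : 𝕜} (hg : HasDerivAt g g' x) (h : ∀ᶠ y in 𝓝 x, g y = 0) : g' = 0 :=
  hg.unique ((hasDerivAt_const x 0).congr_of_eventuallyEq h)

namespace MvPolynomial

@[simp]
theorem pderiv_ofNat {R σ : Type*} [CommSemiring R] (i : σ) (n : ℕ) [n.AtLeastTwo] :
    pderiv i (no_index (OfNat.ofNat n) : MvPolynomial σ R) = 0 := by
  rw [← Nat.cast_ofNat]
  exact (pderiv i).map_natCast n

variable {𝕜 : Type*} [NontriviallyNormedField 𝕜]

theorem hasDerivAt_eval {σ : Type*} [Fintype σ] (P : MvPolynomial σ 𝕜)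
    {f : σ → 𝕜 → 𝕜} {f' : σ → 𝕜} {x : 𝕜} (hf : ∀ i, HasDerivAt (f i) (f' i) x) :
    HasDerivAt (fun y => eval (fun i => f i y) P)
      (∑ i, eval (fun i => f i x) (pderiv i P) * f' i) x := by
  classical
  induction P using MvPolynomial.induction_on with
  | C a => simpa using hasDerivAt_const x a
  | add p q hp hq =>
    simpa only [map_add, add_mul, Finset.sum_add_distrib] using hp.fun_add hq
  | mul_X p j hp =>
    simp only [map_mul, eval_X, pderiv_mul, map_add, pderiv_X, add_mul, Finset.sum_add_distrib]
    refine (hp.fun_mul (hf j)).congr_deriv ?_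
    simp [Pi.single_apply, Finset.sum_mul, mul_right_comm]

section Graph

variable (P : MvPolynomial (Fin 2) 𝕜) {f : 𝕜 → 𝕜} {x : 𝕜}

theorem hasDerivAt_eval_graph {f' : 𝕜} (hf : HasDerivAt f f' x) :
    HasDerivAt (fun y => eval ![f y, y] P)
      (eval ![f x, x] (pderiv 0 P) * f' + eval ![f x, x] (pderiv 1 P)) x := by
  have hγ : ∀ i, HasDerivAt (![f, id] i) (![f', 1] i) x :=
    Fin.forall_fin_two.2 ⟨hf, hasDerivAt_id x⟩
  have hγ_apply : ∀ y, (fun i => ![f, id] i y) = ![f y, y] := fun y => by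
    ext i; fin_cases i <;> rfl
  have h := hasDerivAt_eval P hγ
  simp only [hγ_apply, Fin.sum_univ_two] at h
  simpa using h

variable {P}

theorem eventually_implicit_deriv_eq_zero (hf : ∀ᶠ y in 𝓝 x, DifferentiableAt 𝕜 f y)
    (hP : ∀ᶠ y in 𝓝 x, eval ![f y, y] P = 0) :
    ∀ᶠ y in 𝓝 x, eval ![f y, y] (pderiv 0 P) * deriv f y + eval ![f y, y] (pderiv 1 P) = 0 := by
  filter_upwards [hf, hP.eventually_nhds] with y hfy hPy
  exact (hasDerivAt_eval_graph P hfy.hasDerivAt).eq_zero_of_eventually_eq_zero_s19 hPy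

theorem implicit_second_deriv_eq_zero (hf : ∀ᶠ y in 𝓝 x, DifferentiableAt 𝕜 f y)
    (hf' : DifferentiableAt 𝕜 (deriv f) x) (hP : ∀ᶠ y in 𝓝 x, eval ![f y, y] P = 0) :
    (eval ![f x, x] (pderiv 0 (pderiv 0 P)) * deriv f x +
        eval ![f x, x] (pderiv 1 (pderiv 0 P))) * deriv f x +
      eval ![f x, x] (pderiv 0 P) * deriv (deriv f) x +
      (eval ![f x, x] (pderiv 0 (pderiv 1 P)) * deriv f x +
        eval ![f x, x] (pderiv 1 (pderiv 1 P))) = 0 := by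
  have hfx := hf.self_of_nhds.hasDerivAt
  exact (((hasDerivAt_eval_graph _ hfx).fun_mul hf'.hasDerivAt).fun_add
    (hasDerivAt_eval_graph _ hfx)).eq_zero_of_eventually_eq_zero_s19
    (eventually_implicit_deriv_eq_zero hf hP)

end Graph

end MvPolynomial

def Dpoly.toMvPolynomial : MvPolynomial (Fin 2) ℝ :=
  768 * X 1 ^ 4 * X 0 ^ 4 - 1536 * X 1 ^ 3 * X 0 ^ 4 - 512 * X 1 ^ 3 * X 0 ^ 3 +
    2304 * X 1 ^ 2 * X 0 ^ 4 + 768 * X 1 ^ 2 * X 0 ^ 3 - 1536 * X 1 * X 0 ^ 4 +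
    96 * X 1 ^ 2 * X 0 ^ 2 + 768 * X 1 * X 0 ^ 3 + 768 * X 0 ^ 4 - 96 * X 1 * X 0 ^ 2 -
    512 * X 0 ^ 3 + 96 * X 0 ^ 2 - 1

theorem Dpoly_eq_eval (z x : ℝ) : Dpoly z x = eval ![z, x] Dpoly.toMvPolynomial := by
  simp [Dpoly, Dpoly.toMvPolynomial]

/-- If `ρ` is real-analytic near `x = 1` with `ρ(1) = 1/12` and `D(ρ(x),x) = 0`
identically near `1`, then `ρ'(1) = -1/24`, `ρ''(1) = 19/384`, hence
`μ = -ρ'(1)/ρ(1) = 1/2` and `σ² = μ + μ² - ρ''(1)/ρ(1) = 5/32`. -/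
theorem planar_map_vertex_singularity_derivatives
    (ρ : ℝ → ℝ)
    (hρa : ∃ δ : ℝ, 0 < δ ∧ ∀ x : ℝ, |x - 1| < δ → AnalyticAt ℝ ρ x)
    (hρ1 : ρ 1 = 1 / 12)
    (hD : ∃ δ : ℝ, 0 < δ ∧ ∀ x : ℝ, |x - 1| < δ → Dpoly (ρ x) x = 0) :
    deriv ρ 1 = -(1 / 24) ∧
    iteratedDeriv 2 ρ 1 = 19 / 384 ∧
    -(deriv ρ 1) / ρ 1 = 1 / 2 ∧
    -(deriv ρ 1) / ρ 1 + (-(deriv ρ 1) / ρ 1) ^ 2 -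
      iteratedDeriv 2 ρ 1 / ρ 1 = 5 / 32 := by
  obtain ⟨δ₁, hδ₁, hρa⟩ := hρa
  obtain ⟨δ₂, hδ₂, hD⟩ := hD
  have hA : ∀ᶠ y in 𝓝 (1 : ℝ), AnalyticAt ℝ ρ y := (eventually_abs_sub_lt 1 hδ₁).mono hρa
  have hP : ∀ᶠ y in 𝓝 (1 : ℝ), eval ![ρ y, y] Dpoly.toMvPolynomial = 0 :=
    (eventually_abs_sub_lt 1 hδ₂).mono fun y hy => Dpoly_eq_eval _ _ ▸ hD y hy
  have hdiff := hA.mono fun _ h => h.differentiableAt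
  have hdiff' := hA.self_of_nhds.deriv.differentiableAt
  have first : 256 / 9 * deriv ρ 1 + 32 / 27 = 0 := by
    have h := (eventually_implicit_deriv_eq_zero hdiff hP).self_of_nhds
    norm_num [Dpoly.toMvPolynomial, pderiv_X, hρ1] at h
    linarith
  have second : (512 * deriv ρ 1 + 320 / 9) * deriv ρ 1 + 256 / 9 * deriv (deriv ρ) 1 +
      (320 / 9 * deriv ρ 1 + 2 / 3) = 0 := by
    have h := implicit_second_deriv_eq_zero hdiff hdiff' hP
    norm_num [Dpoly.toMvPolynomial, pderiv_X, hρ1] at h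
    linarith
  have hρ' : deriv ρ 1 = -(1 / 24) := by linarith
  have hρ'' : iteratedDeriv 2 ρ 1 = 19 / 384 := by
    rw [iteratedDeriv_succ, iteratedDeriv_one]
    rw [hρ'] at second
    linarith
  refine ⟨hρ', hρ'', ?_, ?_⟩ <;> norm_num [hρ', hρ'', hρ1]
end
end
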